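/- arXiv:2109.09184 — 5 statements merged into one kernel-verified Lean document; each statement's English description precedes it below -/
import Mathlib

section
/- If y(x) = c·∏_{i=1}^n (x - x_i) with c ≠ 0 and distinct roots x_i, then for x not equal to any root, (a x² + b x + c₀)·y''(x)/y(x) = a(n² − n) + 2·∑_{i=1}^n ∑_{j ≠ i} (a x_i² + b x_i + c₀)/((x_i − x_j)(x − x_i)). -/
/-!
Differentiating the product twice gives `y'' / y = ∑_{i ≠ j} 1 / ((t - x_i)(t - x_j))` over
ordered pairs. For `q t = a t ^ 2 + b t + c₀`, partial fractions give
`q t / ((t - u)(t - v)) = a + q u / ((u - v)(t - u)) + q v / ((v - u)(t - v))`, and the two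
fractions contribute equally once summed over ordered pairs, whence the factor `2`.
-/

open Polynomial Finset

section Algebra

variable {ι K : Type*} [DecidableEq ι] [Field K]

theorem Finset.sum_sum_erase_comm {M : Type*} [AddCommMonoid M] (s : Finset ι)
    (f : ι → ι → M) :
    ∑ i ∈ s, ∑ j ∈ s.erase i, f j i = ∑ i ∈ s, ∑ j ∈ s.erase i, f i j :=
  sum_comm' fun i j => by simp only [mem_erase]; tauto

theorem Finset.sum_sum_erase_const (s : Finset ι) (a : K) :
    ∑ i ∈ s, ∑ _j ∈ s.erase i, a = a * ((#s : K) ^ 2 - #s) := by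
  rw [sum_congr rfl fun i hi => by rw [sum_const, card_erase_of_mem hi], sum_const]
  rcases s.eq_empty_or_nonempty with rfl | hs
  · simp
  · rw [nsmul_eq_mul, nsmul_eq_mul, Nat.cast_sub hs.card_pos]
    push_cast
    ring

theorem Finset.prod_erase_erase_div_prod {s : Finset ι} {f : ι → K}
    (hf : ∀ k ∈ s, f k ≠ 0) {i j : ι} (hi : i ∈ s) (hj : j ∈ s.erase i) :
    (∏ k ∈ (s.erase i).erase j, f k) / ∏ k ∈ s, f k = (f i * f j)⁻¹ := by
  rw [← mul_prod_erase s f hi, ← mul_prod_erase (s.erase i) f hj, ← mul_assoc,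
    div_mul_cancel_right₀
      (prod_ne_zero_iff.mpr fun k hk => hf k (mem_of_mem_erase (mem_of_mem_erase hk)))]

theorem quadratic_div_mul_sub_sub (a b c : K) {u v t : K} (huv : u ≠ v) (htu : t ≠ u)
    (htv : t ≠ v) :
    (a * t ^ 2 + b * t + c) / ((t - u) * (t - v)) =
      a + (a * u ^ 2 + b * u + c) / ((u - v) * (t - u))
        + (a * v ^ 2 + b * v + c) / ((v - u) * (t - v)) := by
  have := sub_ne_zero.mpr huv
  have := sub_ne_zero.mpr huv.symm
  have := sub_ne_zero.mpr htu
  have := sub_ne_zero.mpr htv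
  field_simp
  ring

end Algebra

section SecondDerivative

variable {ι 𝕜 : Type*} [DecidableEq ι] [NontriviallyNormedField 𝕜]

theorem deriv_deriv_polynomial_eval (p : 𝕜[X]) (t : 𝕜) :
    deriv (deriv fun u => p.eval u) t = (derivative (derivative p)).eval t := by
  rw [show deriv (fun u => p.eval u) = fun u => (derivative p).eval u from funext fun _ => p.deriv,
    Polynomial.deriv]

theorem deriv_deriv_const_mul_prod_sub (c : 𝕜) (s : Finset ι) (x : ι → 𝕜) (t : 𝕜) :
    deriv (deriv fun u => c * ∏ i ∈ s, (u - x i)) t =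
      c * ∑ i ∈ s, ∑ j ∈ s.erase i, ∏ k ∈ (s.erase i).erase j, (t - x k) := by
  have h := deriv_deriv_polynomial_eval (C c * ∏ i ∈ s, (X - C (x i))) t
  simp only [eval_mul, eval_C, eval_prod, eval_sub, eval_X] at h
  rw [h]
  simp [derivative_prod_finset, eval_prod, eval_finsetSum]

theorem deriv_deriv_const_mul_prod_sub_div {c : 𝕜} (hc : c ≠ 0) {s : Finset ι} {x : ι → 𝕜}
    {t : 𝕜} (ht : ∀ i ∈ s, t ≠ x i) :
    deriv (deriv fun u => c * ∏ i ∈ s, (u - x i)) t / (c * ∏ i ∈ s, (t - x i)) =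
      ∑ i ∈ s, ∑ j ∈ s.erase i, ((t - x i) * (t - x j))⁻¹ := by
  rw [deriv_deriv_const_mul_prod_sub, mul_div_mul_left _ _ hc, sum_div]
  refine sum_congr rfl fun i hi => ?_
  rw [sum_div]
  exact sum_congr rfl fun j hj =>
    prod_erase_erase_div_prod (fun k hk => sub_ne_zero.mpr (ht k hk)) hi hj

end SecondDerivative

theorem stmt_4 (n : ℕ) (c a b c₀ : ℝ) (x : Fin n → ℝ) (hc : c ≠ 0)
    (hx : Function.Injective x) (t : ℝ) (ht : ∀ i, t ≠ x i) :
    (a * t ^ 2 + b * t + c₀) * deriv (deriv (fun s => c * ∏ i, (s - x i))) t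
        / (c * ∏ i, (t - x i)) =
      a * ((n : ℝ) ^ 2 - n) + 2 * ∑ i, ∑ j ∈ Finset.univ.erase i,
        (a * x i ^ 2 + b * x i + c₀) / ((x i - x j) * (t - x i)) := by
  rw [mul_div_assoc, deriv_deriv_const_mul_prod_sub_div hc fun i _ => ht i, mul_sum]
  calc ∑ i, (a * t ^ 2 + b * t + c₀) * ∑ j ∈ univ.erase i, ((t - x i) * (t - x j))⁻¹
      = ∑ i, ∑ j ∈ univ.erase i,
          (a + (a * x i ^ 2 + b * x i + c₀) / ((x i - x j) * (t - x i))
            + (a * x j ^ 2 + b * x j + c₀) / ((x j - x i) * (t - x j))) := by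
        refine sum_congr rfl fun i _ => ?_
        rw [mul_sum]
        refine sum_congr rfl fun j hj => ?_
        rw [← div_eq_mul_inv]
        exact quadratic_div_mul_sub_sub a b c₀ (hx.ne (ne_of_mem_erase hj).symm) (ht i) (ht j)
    _ = _ := by
        simp only [sum_add_distrib, sum_sum_erase_comm univ
          fun i j => (a * x i ^ 2 + b * x i + c₀) / ((x i - x j) * (t - x i)),
          sum_sum_erase_const, card_univ, Fintype.card_fin]
        ring
end

section
/- Let y be a degree n polynomial with n distinct real roots x_1, ..., x_n satisfying (a x² + b x + c)y'' + (μ x + ν)y' + κ y = 0 for all x. Then for each k ∈ {1, ..., n}, we have 2·∑_{j ≠ k} (a x_k² + b x_k + c)/(x_k − x_j) + ν + μ x_k = 0. -/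
/-!
Write `y t = (t - x k) * g t`. At the root `x k` one has `y = 0`, `y' = g` and `y'' = 2 g'`, so the
equation evaluated there says `2 (a x_k² + b x_k + c) g'/g + μ x_k + ν = 0`, and the logarithmic
derivative of `g = cn ∏_{j ≠ k} (t - x j)` at `x k` is `∑_{j ≠ k} 1 / (x k - x j)`.
-/

section SimpleRoot

variable {𝕜 : Type*} [NontriviallyNormedField 𝕜] {g : 𝕜 → 𝕜} {r : 𝕜}

theorem deriv_sub_mul_at_self (hg : DifferentiableAt 𝕜 g r) :
    deriv (fun t => (t - r) * g t) r = g r := by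
  rw [deriv_fun_mul (by fun_prop) hg]
  simp

theorem deriv_sub_mul (hg : Differentiable 𝕜 g) :
    deriv (fun t => (t - r) * g t) = fun t => g t + (t - r) * deriv g t := by
  funext t
  rw [deriv_fun_mul (by fun_prop) (hg t)]
  simp

theorem deriv_deriv_sub_mul_at_self (hg : Differentiable 𝕜 g)
    (hg' : DifferentiableAt 𝕜 (deriv g) r) :
    deriv (deriv fun t => (t - r) * g t) r = 2 * deriv g r := by
  rw [deriv_sub_mul hg, deriv_fun_add (hg r) (by fun_prop), deriv_sub_mul_at_self hg']
  ring

theorem two_mul_logDeriv_add_eq_zero_of_ode {A B κ : 𝕜} (hg : Differentiable 𝕜 g)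
    (hg' : DifferentiableAt 𝕜 (deriv g) r) (hgr : g r ≠ 0)
    (hode : A * deriv (deriv fun t => (t - r) * g t) r
        + B * deriv (fun t => (t - r) * g t) r + κ * ((r - r) * g r) = 0) :
    2 * A * logDeriv g r + B = 0 := by
  rw [deriv_deriv_sub_mul_at_self hg hg', deriv_sub_mul_at_self (hg r)] at hode
  rw [logDeriv_apply]
  field_simp
  linear_combination hode

end SimpleRoot

theorem logDeriv_prod_sub {𝕜 ι : Type*} [NontriviallyNormedField 𝕜] (s : Finset ι) (x : ι → 𝕜)
    {r : 𝕜} (hr : ∀ j ∈ s, x j ≠ r) :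
    logDeriv (fun t => ∏ j ∈ s, (t - x j)) r = ∑ j ∈ s, (r - x j)⁻¹ := by
  rw [logDeriv_prod (fun j hj => sub_ne_zero.mpr (hr j hj).symm) (fun _ _ => by fun_prop)]
  simp [logDeriv_apply]

theorem stmt_5 (n : ℕ) (a b c μ ν κ cn : ℝ) (x : Fin n → ℝ)
    (hcn : cn ≠ 0) (hx : Function.Injective x)
    (y : ℝ → ℝ) (hy : y = fun t => cn * ∏ i, (t - x i))
    (hode : ∀ t : ℝ, (a * t ^ 2 + b * t + c) * deriv (deriv y) t
        + (μ * t + ν) * deriv y t + κ * y t = 0) :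
    ∀ k : Fin n, 2 * ∑ j ∈ Finset.univ.erase k,
        (a * x k ^ 2 + b * x k + c) / (x k - x j) + ν + μ * x k = 0 := by
  intro k
  set g : ℝ → ℝ := fun t => cn * ∏ j ∈ Finset.univ.erase k, (t - x j)
  have hy_factor : y = fun t => (t - x k) * g t := by
    funext t
    simp only [hy, g, ← Finset.mul_prod_erase _ (fun i => t - x i) (Finset.mem_univ k)]
    ring
  have hroots : ∀ j ∈ Finset.univ.erase k, x j ≠ x k :=
    fun j hj => hx.ne (Finset.ne_of_mem_erase hj)
  have hg : ContDiff ℝ 2 g := by fun_prop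
  have hgk : g (x k) ≠ 0 :=
    mul_ne_zero hcn (Finset.prod_ne_zero_iff.mpr fun j hj => sub_ne_zero.mpr (hroots j hj).symm)
  have hlog : logDeriv g (x k) = ∑ j ∈ Finset.univ.erase k, (x k - x j)⁻¹ := by
    rw [logDeriv_const_mul _ _ hcn, logDeriv_prod_sub _ _ hroots]
  have hode_k := hode (x k)
  rw [hy_factor] at hode_k
  have hrel := two_mul_logDeriv_add_eq_zero_of_ode (hg.differentiable (by norm_num))
    (hg.differentiable_deriv_two (x k)) hgk hode_k
  rw [hlog, mul_assoc, Finset.mul_sum] at hrel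
  simp only [div_eq_mul_inv]
  linear_combination hrel
end

section
/- Let y be a degree n polynomial with n distinct real roots x_1, ..., x_n satisfying the Hermite differential equation y'' − 2x y' + 2n y = 0. Then for each k, ∑_{j ≠ k} 1/(x_k − x_j) − x_k = 0. -/
/-!
Write `y = c (X - x_k) q` with `q = ∏_{j ≠ k} (X - x_j)`. At `x_k` one has `y' = c q` and
`y'' = 2 c q'`, so the differential equation at the root `x_k` reads `q'(x_k) = x_k q(x_k)`.
Since the roots are distinct, `q(x_k) ≠ 0`, and the logarithmic derivative
`q'(x_k) / q(x_k) = ∑_{j ≠ k} 1 / (x_k - x_j)` equals `x_k`.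
-/

open Polynomial Finset Lagrange

theorem Lagrange.eval_derivative_nodal_of_not_node {F ι : Type*} [Field F] [DecidableEq ι]
    {s : Finset ι} {v : ι → F} {x : F} (hx : ∀ i ∈ s, x ≠ v i) :
    (derivative (nodal s v)).eval x = (nodal s v).eval x * ∑ i ∈ s, 1 / (x - v i) := by
  rw [derivative_nodal, eval_finsetSum, mul_sum]
  refine sum_congr rfl fun i hi => ?_
  have hxi : x - v i ≠ 0 := sub_ne_zero.mpr (hx i hi)
  rw [nodal_eq_mul_nodal_erase hi, eval_mul]
  simp only [eval_sub, eval_X, eval_C]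
  field_simp

section

variable {R : Type*} [CommRing R] (a : R) (q : R[X])

theorem Polynomial.eval_derivative_X_sub_C_mul_self :
    (derivative ((X - C a) * q)).eval a = q.eval a := by
  simp [derivative_mul]

theorem Polynomial.eval_derivative_derivative_X_sub_C_mul_self :
    (derivative (derivative ((X - C a) * q))).eval a = 2 * (derivative q).eval a := by
  simp only [derivative_mul, derivative_sub, derivative_X, derivative_C, sub_zero, one_mul,
    derivative_add, eval_add, eval_mul, eval_sub, eval_X, eval_C, sub_self, zero_mul, add_zero]
  ring

end

theorem Polynomial.deriv_fun_eval {𝕜 : Type*} [NontriviallyNormedField 𝕜] (p : 𝕜[X]) :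
    deriv (fun t => p.eval t) = fun t => (derivative p).eval t := by
  ext; exact p.deriv

theorem stmt_7 (n : ℕ) (cn : ℝ) (x : Fin n → ℝ)
    (hcn : cn ≠ 0) (hx : Function.Injective x)
    (y : ℝ → ℝ) (hy : y = fun t => cn * ∏ i, (t - x i))
    (hode : ∀ t : ℝ, deriv (deriv y) t - 2 * t * deriv y t + 2 * n * y t = 0) :
    ∀ k : Fin n, ∑ j ∈ Finset.univ.erase k, 1 / (x k - x j) - x k = 0 := by
  intro k
  set q := nodal (univ.erase k) x
  set p := C cn * ((X - C (x k)) * q) with hp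
  have hyp : y = fun t => p.eval t := by
    rw [hy, hp, ← nodal_eq_mul_nodal_erase (mem_univ k)]
    simp [eval_nodal]
  have hroot : ∀ i ∈ univ.erase k, x k ≠ x i := fun i hi => hx.ne (ne_of_mem_erase hi).symm
  have hq : q.eval (x k) ≠ 0 := eval_nodal_not_at_node hroot
  have hode_k : 2 * cn * (derivative q).eval (x k) - 2 * x k * (cn * q.eval (x k)) = 0 := by
    have h := hode (x k)
    rw [hyp, deriv_fun_eval, deriv_fun_eval, hp] at h
    simp only [derivative_C_mul, eval_mul, eval_C,
      eval_derivative_X_sub_C_mul_self, eval_derivative_derivative_X_sub_C_mul_self,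
      eval_sub, eval_X, sub_self, zero_mul, mul_zero, add_zero] at h
    linarith
  rw [eval_derivative_nodal_of_not_node hroot] at hode_k
  have hfactor : q.eval (x k) * cn * (∑ j ∈ univ.erase k, 1 / (x k - x j) - x k) = 0 := by
    linear_combination hode_k / 2
  simpa [hq, hcn] using hfactor
end

section
/- Let α, β > −1. The function ln f(x⃗) = ∑_{k=1}^n [(α+1)/2 · ln(1 − x_k) + (β+1)/2 · ln(1 + x_k)] + ∑_{i<j} ln(x_j − x_i) is strictly concave on D_n = {x⃗ ∈ ℝⁿ : −1 < x_1 < ... < x_n < 1}, and hence has at most one critical point in D_n. -/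
/-!
Every summand of `F` is a nonnegative multiple of `log` composed with an affine map that is
positive on `D`, hence concave there. The terms `(α + 1) / 2 * log (1 - x k)` are moreover
strictly concave in the coordinate `x k`, and two distinct points differ in some coordinate, so
`F` is strictly concave. A critical point of a concave function is a global maximum (restrict
to the segment towards any other point), and a strictly concave function has at most one
maximizer.
-/

open Set Real

theorem StrictConcaveOn.comp_affineEquiv {𝕜 E F β : Type*} [Ring 𝕜] [PartialOrder 𝕜]
    [AddCommGroup E] [Module 𝕜 E] [AddCommGroup F] [Module 𝕜 F]
    [AddCommMonoid β] [PartialOrder β] [SMul 𝕜 β] {s : Set F} {f : F → β}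
    (hf : StrictConcaveOn 𝕜 s f) (e : E ≃ᵃ[𝕜] F) : StrictConcaveOn 𝕜 (e ⁻¹' s) (f ∘ e) := by
  refine ⟨hf.1.affine_preimage e.toAffineMap, fun x hx y hy hxy a b ha hb hab => ?_⟩
  have he : e (a • x + b • y) = a • e x + b • e y :=
    Convex.combo_affine_apply (f := e.toAffineMap) hab
  simpa only [Function.comp_apply, he] using hf.2 hx hy (e.injective.ne hxy) ha hb hab

section Convexity

variable {𝕜 E : Type*} [Field 𝕜] [LinearOrder 𝕜] [IsStrictOrderedRing 𝕜]
  [AddCommGroup E] [Module 𝕜 E]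

theorem StrictConcaveOn.const_mul {s : Set E} {f : E → 𝕜} {c : 𝕜} (hc : 0 < c)
    (hf : StrictConcaveOn 𝕜 s f) : StrictConcaveOn 𝕜 s fun x => c * f x := by
  refine ⟨hf.1, fun x hx y hy hxy a b ha hb hab => ?_⟩
  have := mul_lt_mul_of_pos_left (hf.2 hx hy hxy ha hb hab) hc
  simp only [smul_eq_mul] at this ⊢
  linarith

theorem ConcaveOn.sum {ι : Type*} {t : Finset ι} {s : Set E} {f : ι → E → 𝕜} (hs : Convex 𝕜 s)
    (hf : ∀ i ∈ t, ConcaveOn 𝕜 s (f i)) : ConcaveOn 𝕜 s fun x => ∑ i ∈ t, f i x := by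
  classical
  induction t using Finset.induction_on with
  | empty => simpa using concaveOn_const (0 : 𝕜) hs
  | insert i t hi ih =>
    simp only [Finset.sum_insert hi]
    exact (hf i (Finset.mem_insert_self i t)).add
      (ih fun j hj => hf j (Finset.mem_insert_of_mem hj))

theorem StrictConcaveOn.sum_pi {ι : Type*} [Fintype ι] {s : ι → Set E} {g : ι → E → 𝕜}
    (hg : ∀ i, StrictConcaveOn 𝕜 (s i) (g i)) :
    StrictConcaveOn 𝕜 (univ.pi s) fun x => ∑ i, g i (x i) := by
  refine ⟨convex_pi (𝕜 := 𝕜) (E := fun _ => E) fun i _ => (hg i).1,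
    fun x hx y hy hxy a b ha hb hab => ?_⟩
  rw [mem_univ_pi] at hx hy
  obtain ⟨k, hk⟩ := Function.ne_iff.1 hxy
  simp only [smul_eq_mul, Finset.mul_sum, ← Finset.sum_add_distrib, Pi.add_apply, Pi.smul_apply]
  refine Finset.sum_lt_sum (fun i _ => ?_) ⟨k, Finset.mem_univ k, ?_⟩
  · simpa only [smul_eq_mul] using (hg i).concaveOn.2 (hx i) (hy i) ha.le hb.le hab
  · simpa only [smul_eq_mul] using (hg k).2 (hx k) (hy k) hk ha hb hab

end Convexity

theorem convex_setOf_strictMono {ι : Type*} [Preorder ι] :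
    Convex ℝ {x : ι → ℝ | StrictMono x} := by
  have : {x : ι → ℝ | StrictMono x} = ⋂ i, ⋂ j, ⋂ (_ : i < j), {x | x i - x j < 0} := by
    ext x; simp [StrictMono]
  rw [this]
  refine convex_iInter fun i => convex_iInter fun j => convex_iInter fun _ => ?_
  exact convex_halfSpace_lt
    ((LinearMap.proj (R := ℝ) (φ := fun _ : ι => ℝ) i - LinearMap.proj j).isLinear) 0

theorem strictConcaveOn_mul_log_one_sub_add_mul_log_one_add {a b : ℝ} (ha : 0 < a) (hb : 0 ≤ b) :
    StrictConcaveOn ℝ (Ioo (-1) 1) fun t => a * log (1 - t) + b * log (1 + t) := by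
  have hsub : StrictConcaveOn ℝ (Iio 1) fun t => log (1 - t) := by
    have h := strictConcaveOn_log_Ioi.comp_affineEquiv (AffineEquiv.constVSub ℝ (1 : ℝ))
    have hs : ⇑(AffineEquiv.constVSub ℝ (1 : ℝ)) ⁻¹' Ioi 0 = Iio 1 := by ext; simp
    rwa [hs] at h
  have hadd : StrictConcaveOn ℝ (Ioi (-1)) fun t => log (1 + t) := by
    have h := strictConcaveOn_log_Ioi.comp_affineEquiv (AffineEquiv.constVAdd ℝ ℝ (1 : ℝ))
    have hs : ⇑(AffineEquiv.constVAdd ℝ ℝ (1 : ℝ)) ⁻¹' Ioi 0 = Ioi (-1) := by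
      ext; simp [neg_lt_iff_pos_add']
    rwa [hs] at h
  exact ((hsub.subset Ioo_subset_Iio_self (convex_Ioo _ _)).const_mul ha).add_concaveOn
    ((hadd.concaveOn.subset Ioo_subset_Ioi_self (convex_Ioo _ _)).smul hb)

theorem ConcaveOn.le_add_of_hasFDerivAt {E : Type*} [NormedAddCommGroup E] [NormedSpace ℝ E]
    {s : Set E} {f : E → ℝ} {f' : E →L[ℝ] ℝ} {x y : E} (hf : ConcaveOn ℝ s f) (hx : x ∈ s)
    (hy : y ∈ s) (hf' : HasFDerivAt f f' x) : f y ≤ f x + f' (y - x) := by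
  have hg : ConcaveOn ℝ (Icc (0 : ℝ) 1) (f ∘ (AffineMap.lineMap x y : ℝ →ᵃ[ℝ] E)) :=
    (hf.comp_affineMap _).subset (fun t ht => hf.1.lineMap_mem hx hy ht) (convex_Icc 0 1)
  have hg' : HasDerivAt (f ∘ (AffineMap.lineMap x y : ℝ →ᵃ[ℝ] E)) (f' (y - x)) 0 := by
    refine hf'.comp_hasDerivAt_of_eq 0 AffineMap.hasDerivAt_lineMap ?_
    simp
  have := hg.slope_le_of_hasDerivAt (by simp) (by simp) zero_lt_one hg'
  simp only [slope, sub_zero, inv_one, one_smul, Function.comp_apply,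
    AffineMap.lineMap_apply_zero, AffineMap.lineMap_apply_one, vsub_eq_sub] at this
  linarith

theorem ConcaveOn.isMaxOn_of_hasFDerivAt_zero {E : Type*} [NormedAddCommGroup E]
    [NormedSpace ℝ E] {s : Set E} {f : E → ℝ} {x : E} (hf : ConcaveOn ℝ s f) (hx : x ∈ s)
    (hf' : HasFDerivAt f (0 : E →L[ℝ] ℝ) x) : IsMaxOn f s x := fun y hy => by
  simpa using hf.le_add_of_hasFDerivAt hx hy hf'

noncomputable def logVandermonde {ι : Type*} [Fintype ι] [LinearOrder ι] (x : ι → ℝ) : ℝ :=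
  ∑ i, ∑ j ∈ Finset.univ.filter (fun j => i < j), log (x j - x i)

section logVandermonde

variable {ι : Type*} [Fintype ι] [LinearOrder ι]

theorem concaveOn_logVandermonde : ConcaveOn ℝ {x : ι → ℝ | StrictMono x} logVandermonde := by
  refine ConcaveOn.sum convex_setOf_strictMono fun i _ =>
    ConcaveOn.sum convex_setOf_strictMono fun j hj => ?_
  have hij : i < j := (Finset.mem_filter.1 hj).2
  refine (strictConcaveOn_log_Ioi.concaveOn.comp_linearMap
    (LinearMap.proj (R := ℝ) (φ := fun _ : ι => ℝ) j - LinearMap.proj i)).subset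
    (fun x hx => ?_) convex_setOf_strictMono
  simpa using hx hij

theorem differentiableAt_logVandermonde {x : ι → ℝ} (hx : StrictMono x) :
    DifferentiableAt ℝ logVandermonde x := by
  unfold logVandermonde
  refine DifferentiableAt.fun_sum fun i _ => DifferentiableAt.fun_sum fun j hj => ?_
  have hij : x i < x j := hx (Finset.mem_filter.1 hj).2
  fun_prop (disch := linarith)

end logVandermonde

theorem differentiableAt_sum_mul_log_one_sub_add_mul_log_one_add {ι : Type*} [Fintype ι]
    {a b : ℝ} {x : ι → ℝ} (hx : ∀ k, x k ∈ Ioo (-1) 1) :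
    DifferentiableAt ℝ (fun x : ι → ℝ => ∑ k, (a * log (1 - x k) + b * log (1 + x k))) x := by
  refine DifferentiableAt.fun_sum fun k _ => ?_
  have h₁ : 1 - x k ≠ 0 := by linarith [(hx k).2]
  have h₂ : 1 + x k ≠ 0 := by linarith [(hx k).1]
  fun_prop (disch := assumption)

theorem stmt_10_general (n : ℕ) (α β : ℝ) (hα : -1 < α) (hβ : -1 < β)
    (F : (Fin n → ℝ) → ℝ)
    (hF : F = fun x => (∑ k, ((α + 1) / 2 * Real.log (1 - x k)
        + (β + 1) / 2 * Real.log (1 + x k)))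
      + ∑ i, ∑ j ∈ Finset.univ.filter (fun j => i < j), Real.log (x j - x i))
    (D : Set (Fin n → ℝ))
    (hD : D = {x | StrictMono x ∧ ∀ k, x k ∈ Set.Ioo (-1 : ℝ) 1}) :
    StrictConcaveOn ℝ D F ∧
      ∀ x ∈ D, ∀ y ∈ D, fderiv ℝ F x = 0 → fderiv ℝ F y = 0 → x = y := by
  have hF' : F = (fun x => ∑ k, ((α + 1) / 2 * log (1 - x k) + (β + 1) / 2 * log (1 + x k)))
      + logVandermonde := hF
  have hD' : D = {x | StrictMono x} ∩ univ.pi fun _ => Ioo (-1) 1 := by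
    ext x
    simp only [hD, mem_inter_iff, mem_ofPred_eq, mem_univ_pi]
  have hDconvex : Convex ℝ D :=
    hD' ▸ convex_setOf_strictMono.inter (convex_pi fun _ _ => convex_Ioo _ _)
  have hconcave : StrictConcaveOn ℝ D F := by
    rw [hF']
    refine ((StrictConcaveOn.sum_pi fun _ => strictConcaveOn_mul_log_one_sub_add_mul_log_one_add
      (by linarith) (by linarith)).subset (hD' ▸ inter_subset_right) hDconvex).add_concaveOn
      (concaveOn_logVandermonde.subset (hD' ▸ inter_subset_left) hDconvex)
  have hcrit_max : ∀ z ∈ D, fderiv ℝ F z = 0 → IsMaxOn F D z := by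
    intro z hz hFz
    obtain ⟨hmono, hbox⟩ : StrictMono z ∧ ∀ k, z k ∈ Ioo (-1) 1 := by rwa [hD] at hz
    have hdiff : DifferentiableAt ℝ F z := hF' ▸
      (differentiableAt_sum_mul_log_one_sub_add_mul_log_one_add hbox).add
        (differentiableAt_logVandermonde hmono)
    exact hconcave.concaveOn.isMaxOn_of_hasFDerivAt_zero hz (hFz ▸ hdiff.hasFDerivAt)
  exact ⟨hconcave, fun x hx y hy hFx hFy =>
    hconcave.eq_of_isMaxOn (hcrit_max x hx hFx) (hcrit_max y hy hFy) hx hy⟩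

theorem stmt_10 (n : ℕ) (hn : 1 ≤ n) (α β : ℝ) (hα : -1 < α) (hβ : -1 < β)
    (F : (Fin n → ℝ) → ℝ)
    (hF : F = fun x => (∑ k, ((α + 1) / 2 * Real.log (1 - x k)
        + (β + 1) / 2 * Real.log (1 + x k)))
      + ∑ i, ∑ j ∈ Finset.univ.filter (fun j => i < j), Real.log (x j - x i))
    (D : Set (Fin n → ℝ))
    (hD : D = {x | StrictMono x ∧ ∀ k, x k ∈ Set.Ioo (-1 : ℝ) 1}) :
    StrictConcaveOn ℝ D F ∧
      ∀ x ∈ D, ∀ y ∈ D, fderiv ℝ F x = 0 → fderiv ℝ F y = 0 → x = y :=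
  stmt_10_general n α β hα hβ F hF D hD
end

section
/- Let x_1 < x_2 < ... < x_n be real numbers satisfying ∑_{j ≠ k} 1/(x_k − x_j) = x_k for each k. Then ∑_{k=1}^n x_k² = n(n−1)/2. -/
/-! Multiply the k-th equation by x_k and sum: ∑ x_k² = ∑_{j ≠ k} x_k / (x_k - x_j). Swapping j and k
in this double sum and adding the two expressions pairs each term with
x_j / (x_j - x_k), and the two add up to 1; so twice the sum counts the n(n-1) ordered pairs. -/

open Finset

lemma div_sub_add_div_sub_self {K : Type*} [Field K] {a b : K} (h : a ≠ b) :
    a / (a - b) + b / (b - a) = 1 := by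
  rw [← neg_sub a b, div_neg, ← sub_eq_add_neg, ← sub_div, div_self (sub_ne_zero.mpr h)]

lemma two_mul_sum_sum_erase_div_sub {K ι : Type*} [Field K] [Fintype ι] [DecidableEq ι]
    {x : ι → K} (hx : Function.Injective x) :
    2 * ∑ k, ∑ j ∈ univ.erase k, x k / (x k - x j) =
      Fintype.card ι * (Fintype.card ι - 1) := by
  have hswap : ∑ k, ∑ j ∈ univ.erase k, x k / (x k - x j) =
      ∑ k, ∑ j ∈ univ.erase k, x j / (x j - x k) :=
    sum_comm' fun k j => by simp [ne_comm]
  calc 2 * ∑ k, ∑ j ∈ univ.erase k, x k / (x k - x j)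
      = ∑ k, ∑ j ∈ univ.erase k, (x k / (x k - x j) + x j / (x j - x k)) := by
        rw [two_mul]; nth_rewrite 2 [hswap]; simp only [← sum_add_distrib]
    _ = ∑ k : ι, ∑ j ∈ univ.erase k, (1 : K) := by
        refine sum_congr rfl fun k _ => sum_congr rfl fun j hj => ?_
        exact div_sub_add_div_sub_self (hx.ne (mem_erase.mp hj).1.symm)
    _ = Fintype.card ι * (Fintype.card ι - 1) := by
        simp only [sum_erase_eq_sub (mem_univ _), sum_const, card_univ, nsmul_eq_mul, mul_one]

theorem stmt_18_general (n : ℕ) (x : Fin n → ℝ) (hx : StrictMono x)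
    (heq : ∀ k : Fin n, ∑ j ∈ Finset.univ.erase k, 1 / (x k - x j) - x k = 0) :
    ∑ k, (x k) ^ 2 = n * (n - 1) / 2 := by
  have hsq : ∀ k, x k ^ 2 = ∑ j ∈ univ.erase k, x k / (x k - x j) := fun k => by
    simp only [div_eq_mul_one_div (x k), ← mul_sum, sub_eq_zero.mp (heq k), sq]
  rw [sum_congr rfl fun k _ => hsq k, eq_div_iff two_ne_zero, mul_comm,
    two_mul_sum_sum_erase_div_sub hx.injective, Fintype.card_fin]

theorem stmt_18 (n : ℕ) (hn : 1 ≤ n) (x : Fin n → ℝ) (hx : StrictMono x)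
    (heq : ∀ k : Fin n, ∑ j ∈ Finset.univ.erase k, 1 / (x k - x j) - x k = 0) :
    ∑ k, (x k) ^ 2 = n * (n - 1) / 2 :=
  stmt_18_general n x hx heq
end
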